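/- If G is a connected simple graph on n ≥ 3 vertices with m edges and Zagreb index Zg(G), then QE(G) ≤ 2m/n + √((n−1)·[2m + Zg(G) − (4m²/n)(1 + 1/n)]), where QE(G) is the signless Laplacian energy of G. -/

import Mathlib

open Matrix Finset

noncomputable def alphaMatrix {n : ℕ} (G : SimpleGraph (Fin n)) [DecidableRel G.Adj] (α : ℝ) :
    Matrix (Fin n) (Fin n) ℝ :=
  α • Matrix.diagonal (fun v => (G.degree v : ℝ)) + (1 - α) • (G.adjMatrix ℝ)

lemma adjMatrix_isHermitian {n : ℕ} (G : SimpleGraph (Fin n)) [DecidableRel G.Adj] :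
    (G.adjMatrix ℝ).IsHermitian := by
  rw [Matrix.IsHermitian, conjTranspose_eq_transpose_of_trivial]
  exact (G.isSymm_adjMatrix (α := ℝ))

lemma alphaMatrix_isHermitian {n : ℕ} (G : SimpleGraph (Fin n)) [DecidableRel G.Adj] (α : ℝ) :
    (alphaMatrix G α).IsHermitian := by
  rw [Matrix.IsHermitian, conjTranspose_eq_transpose_of_trivial]
  unfold alphaMatrix
  rw [Matrix.transpose_add, Matrix.transpose_smul, Matrix.transpose_smul,
    Matrix.diagonal_transpose, (G.isSymm_adjMatrix (α := ℝ))]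

noncomputable def zagreb {n : ℕ} (G : SimpleGraph (Fin n)) [DecidableRel G.Adj] : ℝ :=
  ∑ v, (G.degree v : ℝ) ^ 2

noncomputable def alphaEnergy {n : ℕ} (G : SimpleGraph (Fin n)) [DecidableRel G.Adj] (α : ℝ) : ℝ :=
  ∑ i, |(alphaMatrix_isHermitian G α).eigenvalues i
        - 2 * α * (G.edgeFinset.card : ℝ) / n|

noncomputable def adjEnergy {n : ℕ} (G : SimpleGraph (Fin n)) [DecidableRel G.Adj] : ℝ :=
  ∑ i, |(adjMatrix_isHermitian G).eigenvalues i|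

noncomputable def signlessLap {n : ℕ} (G : SimpleGraph (Fin n)) [DecidableRel G.Adj] :
    Matrix (Fin n) (Fin n) ℝ :=
  Matrix.diagonal (fun v => (G.degree v : ℝ)) + G.adjMatrix ℝ

lemma signlessLap_isHermitian {n : ℕ} (G : SimpleGraph (Fin n)) [DecidableRel G.Adj] :
    (signlessLap G).IsHermitian := by
  rw [Matrix.IsHermitian, conjTranspose_eq_transpose_of_trivial]
  unfold signlessLap
  rw [Matrix.transpose_add, Matrix.diagonal_transpose, (G.isSymm_adjMatrix (α := ℝ))]

noncomputable def signlessLapEnergy {n : ℕ} (G : SimpleGraph (Fin n)) [DecidableRel G.Adj] : ℝ :=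
  ∑ i, |(signlessLap_isHermitian G).eigenvalues i - 2 * (G.edgeFinset.card : ℝ) / n|

/-! The eigenvalues `qᵢ` of `Q = D + A` are nonnegative (`Q = B Bᵀ` for the incidence
matrix `B`), sum to `tr Q = 2m` and have square sum `tr Q² = 2m + Zg`; the Rayleigh quotient
of the all-ones vector gives `q₁ ≥ 4m/n = 2μ`, where `μ = 2m/n`. Splitting off the largest
deviation `x = q₁ - μ` and applying Cauchy–Schwarz to the other `n - 1` gives
`QE ≤ x + √((n - 1)(S - x²))` with `S = ∑ (qᵢ - μ)²`. As `0 ≤ qᵢ ≤ q₁`, the Bhatia–Davis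
inequality gives `S ≤ n μ x`, and under this constraint the bound does not exceed its value
at `x = μ`. -/

namespace Matrix.IsHermitian

variable {ι : Type*} [Fintype ι] [DecidableEq ι]

theorem trace_mul_self_eq_sum_sq {𝕜 : Type*} [RCLike 𝕜] {A : Matrix ι ι 𝕜}
    (hA : A.IsHermitian) :
    (A * A).trace = ∑ i, (hA.eigenvalues i : 𝕜) ^ 2 := by
  conv_lhs => rw [hA.spectral_theorem, ← map_mul, Unitary.conjStarAlgAut_apply]
  rw [trace_mul_cycle, Unitary.coe_star_mul_self, one_mul, diagonal_mul_diagonal, trace_diagonal]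
  simp [sq]

theorem dotProduct_mulVec_le {A : Matrix ι ι ℝ} (hA : A.IsHermitian) {c : ℝ}
    (hc : ∀ i, hA.eigenvalues i ≤ c) (v : ι → ℝ) :
    v ⬝ᵥ (A *ᵥ v) ≤ c * (v ⬝ᵥ v) := by
  have hpsd : (c • 1 - A).PosSemidef := by
    have hdiag : (c • 1 - diagonal hA.eigenvalues).PosSemidef := by
      rw [smul_one_eq_diagonal, diagonal_sub]
      exact PosSemidef.diagonal fun i ↦ sub_nonneg.2 (hc i)
    have hconj : c • 1 - A = (hA.eigenvectorUnitary : Matrix ι ι ℝ) *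
        (c • 1 - diagonal hA.eigenvalues) * star (hA.eigenvectorUnitary : Matrix ι ι ℝ) := by
      conv_lhs => rw [hA.spectral_theorem]
      simp [mul_sub, sub_mul]
    rw [hconj]
    exact hdiag.mul_mul_conjTranspose_same _
  simpa [sub_mulVec, dotProduct_sub, smul_mulVec, dotProduct_smul] using
    hpsd.dotProduct_mulVec_nonneg v

end Matrix.IsHermitian

namespace SimpleGraph

variable {V : Type*} [Fintype V] (G : SimpleGraph V) [DecidableRel G.Adj]

theorem sum_degrees_cast_eq_twice_card_edges {R : Type*} [Semiring R] :
    ∑ v, (G.degree v : R) = 2 * #G.edgeFinset := by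
  rw [← Nat.cast_sum, G.sum_degrees_eq_twice_card_edges, Nat.cast_mul, Nat.cast_ofNat]

end SimpleGraph

section SignlessLaplacian

variable {n : ℕ} (G : SimpleGraph (Fin n)) [DecidableRel G.Adj]

theorem signlessLap_eq_incMatrix_mul_transpose :
    signlessLap G = G.incMatrix ℝ * (G.incMatrix ℝ)ᵀ := by
  rw [SimpleGraph.incMatrix_mul_transpose]
  ext a b
  by_cases hab : a = b
  · subst hab; simp [signlessLap]
  · simp [signlessLap, hab, SimpleGraph.adjMatrix_apply]

theorem signlessLap_posSemidef : (signlessLap G).PosSemidef := by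
  rw [signlessLap_eq_incMatrix_mul_transpose, ← conjTranspose_eq_transpose_of_trivial]
  exact posSemidef_self_mul_conjTranspose _

theorem trace_signlessLap : (signlessLap G).trace = 2 * #G.edgeFinset := by
  simp [signlessLap, G.sum_degrees_cast_eq_twice_card_edges]

theorem trace_signlessLap_mul_self :
    (signlessLap G * signlessLap G).trace = 2 * #G.edgeFinset + zagreb G := by
  have hDA : (diagonal (fun v ↦ (G.degree v : ℝ)) * G.adjMatrix ℝ).trace = 0 := by
    simp [trace, diagonal_mul, -SimpleGraph.mul_adjMatrix_apply]
  simp only [signlessLap, add_mul, mul_add, trace_add, trace_mul_comm (G.adjMatrix ℝ), hDA]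
  simp only [trace, diagonal_mul_diagonal, diag_apply, diagonal_apply_eq, add_zero,
    G.adjMatrix_mul_self_apply_self, G.sum_degrees_cast_eq_twice_card_edges, zero_add, zagreb, sq]
  ring

theorem signlessLap_mulVec_one : signlessLap G *ᵥ 1 = fun v ↦ 2 * (G.degree v : ℝ) := by
  ext v
  simp only [signlessLap, add_mulVec, Pi.add_apply, mulVec_diagonal, Pi.one_apply, mul_one,
    SimpleGraph.adjMatrix_mulVec_apply, sum_const, SimpleGraph.card_neighborFinset_eq_degree,
    nsmul_eq_mul]
  ring

theorem one_dotProduct_signlessLap_mulVec_one :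
    1 ⬝ᵥ (signlessLap G *ᵥ 1) = 4 * #G.edgeFinset := by
  simp only [signlessLap_mulVec_one, one_dotProduct, ← mul_sum,
    G.sum_degrees_cast_eq_twice_card_edges]
  ring

end SignlessLaplacian

theorem add_sqrt_le_add_sqrt {N S x μ : ℝ} (hN : 2 ≤ N) (hμ : 0 ≤ μ) (hμx : μ ≤ x)
    (hxS : x ^ 2 ≤ S) (hSx : S ≤ N * μ * x) :
    x + √((N - 1) * (S - x ^ 2)) ≤ μ + √((N - 1) * (S - μ ^ 2)) := by
  set a := √((N - 1) * (S - x ^ 2))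
  have ha : a ^ 2 = (N - 1) * (S - x ^ 2) := Real.sq_sqrt (by nlinarith)
  -- Since `μ ≤ x`, squaring reduces the claim to this bound, which holds because
  -- `4 (N - 1) (N μ x - x²) = ((N - 2) x + N μ)² - N² (x - μ)²`.
  have ha_le : 2 * a ≤ (N - 2) * x + N * μ := by
    refine le_of_pow_le_pow_left₀ two_ne_zero (by nlinarith) ?_
    nlinarith [sq_nonneg (N * (x - μ)), mul_le_mul_of_nonneg_left hSx (by linarith : 0 ≤ N - 1)]
  have : (x - μ + a) ^ 2 ≤ (N - 1) * (S - μ ^ 2) := by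
    nlinarith [mul_le_mul_of_nonneg_left ha_le (by linarith : 0 ≤ x - μ)]
  linarith [Real.le_sqrt_of_sq_le this]

section MeanDeviation

variable {ι : Type*}

theorem sum_sub_sq_eq_of_sum_eq (s : Finset ι) (f : ι → ℝ) {μ : ℝ}
    (hμ : ∑ i ∈ s, f i = #s * μ) :
    ∑ i ∈ s, (f i - μ) ^ 2 = ∑ i ∈ s, f i ^ 2 - #s * μ ^ 2 := by
  simp only [sub_sq, sum_add_distrib, sum_sub_distrib, ← sum_mul, ← mul_sum, hμ, sum_const,
    nsmul_eq_mul]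
  ring

/-- The Bhatia–Davis inequality. -/
theorem sum_sub_sq_le_of_mem_Icc (s : Finset ι) (f : ι → ℝ) {μ a b : ℝ}
    (hμ : ∑ i ∈ s, f i = #s * μ) (hf : ∀ i ∈ s, f i ∈ Set.Icc a b) :
    ∑ i ∈ s, (f i - μ) ^ 2 ≤ #s * ((b - μ) * (μ - a)) := by
  have hdev : ∑ i ∈ s, (f i - μ) = 0 := by simp [sum_sub_distrib, hμ]
  calc ∑ i ∈ s, (f i - μ) ^ 2
      ≤ ∑ i ∈ s, ((b - μ) * (μ - a) + (a + b - 2 * μ) * (f i - μ)) := by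
        refine sum_le_sum fun i hi ↦ ?_
        obtain ⟨hai, hib⟩ := hf i hi
        nlinarith [mul_nonneg (sub_nonneg.2 hai) (sub_nonneg.2 hib)]
    _ = #s * ((b - μ) * (μ - a)) := by
        rw [sum_add_distrib, ← mul_sum s (fun i ↦ f i - μ), hdev, sum_const, nsmul_eq_mul]
        ring

theorem sum_abs_le_abs_add_sqrt [DecidableEq ι] {s : Finset ι} {i : ι} (hi : i ∈ s)
    (g : ι → ℝ) :
    ∑ j ∈ s, |g j| ≤ |g i| + √((#s - 1) * (∑ j ∈ s, g j ^ 2 - g i ^ 2)) := by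
  rw [← add_sum_erase s _ hi, ← add_sum_erase s _ hi, add_sub_cancel_left]
  gcongr
  apply Real.le_sqrt_of_sq_le
  have hcard : ((s.erase i).card : ℝ) = #s - 1 := by
    rw [card_erase_of_mem hi, Nat.cast_sub (card_pos.2 ⟨i, hi⟩)]; simp
  simpa only [sq_abs, hcard] using sq_sum_le_card_mul_sum_sq (s := s.erase i) (f := fun j ↦ |g j|)

theorem sum_abs_sub_le_of_two_mul_le_max [Fintype ι] [DecidableEq ι] (f : ι → ℝ)
    {μ : ℝ} {i₀ : ι} (hcard : 2 ≤ Fintype.card ι) (hf : ∀ i, 0 ≤ f i)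
    (hmax : ∀ i, f i ≤ f i₀) (hμ : ∑ i, f i = Fintype.card ι * μ) (hμi₀ : 2 * μ ≤ f i₀) :
    ∑ i, |f i - μ| ≤
      μ + √((Fintype.card ι - 1) * (∑ i, f i ^ 2 - Fintype.card ι * μ ^ 2 - μ ^ 2)) := by
  have hN : (2 : ℝ) ≤ Fintype.card ι := by exact_mod_cast hcard
  have hμ₀ : 0 ≤ μ := by
    have : 0 ≤ (Fintype.card ι : ℝ) * μ := hμ ▸ sum_nonneg fun i _ ↦ hf i
    nlinarith
  rw [← card_univ] at hμ ⊢
  have hvar := sum_sub_sq_eq_of_sum_eq univ f hμ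
  have hmaxS : (f i₀ - μ) ^ 2 ≤ ∑ i, (f i - μ) ^ 2 :=
    single_le_sum (f := fun i ↦ (f i - μ) ^ 2) (fun i _ ↦ sq_nonneg _) (mem_univ i₀)
  have hbd := sum_sub_sq_le_of_mem_Icc univ f hμ (a := 0) (b := f i₀)
    fun i _ ↦ ⟨hf i, hmax i⟩
  calc ∑ i, |f i - μ|
      ≤ |f i₀ - μ| + √((#univ - 1) * (∑ i, (f i - μ) ^ 2 - (f i₀ - μ) ^ 2)) :=
        sum_abs_le_abs_add_sqrt (mem_univ i₀) _
    _ ≤ μ + √((#univ - 1) * (∑ i, (f i - μ) ^ 2 - μ ^ 2)) := by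
        rw [abs_of_nonneg (by linarith)]
        exact add_sqrt_le_add_sqrt (by rwa [card_univ]) hμ₀ (by linarith) hmaxS (by linarith)
    _ = μ + √((#univ - 1) * (∑ i, f i ^ 2 - #univ * μ ^ 2 - μ ^ 2)) := by rw [hvar]

end MeanDeviation

theorem stmt_9_general {n : ℕ} (hn : 3 ≤ n) (G : SimpleGraph (Fin n)) [DecidableRel G.Adj] :
    signlessLapEnergy G ≤ 2 * (G.edgeFinset.card : ℝ) / n
      + Real.sqrt (((n : ℝ) - 1) *
          (2 * (G.edgeFinset.card : ℝ) + zagreb G - (4 * (G.edgeFinset.card : ℝ) ^ 2 / n) * (1 + 1 / n))) := by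
  have hQ := signlessLap_isHermitian G
  have hn₀ : (n : ℝ) ≠ 0 := by positivity
  have : Nonempty (Fin n) := ⟨⟨0, by omega⟩⟩
  obtain ⟨i₀, hmax⟩ := Finite.exists_max hQ.eigenvalues
  have hsum : ∑ i, hQ.eigenvalues i = 2 * #G.edgeFinset := by
    simpa using hQ.trace_eq_sum_eigenvalues.symm.trans (trace_signlessLap G)
  have hsq : ∑ i, hQ.eigenvalues i ^ 2 = 2 * #G.edgeFinset + zagreb G := by
    simpa using hQ.trace_mul_self_eq_sum_sq.symm.trans (trace_signlessLap_mul_self G)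
  have hrayleigh : 4 * (#G.edgeFinset : ℝ) ≤ hQ.eigenvalues i₀ * n := by
    simpa only [one_dotProduct_signlessLap_mulVec_one, one_dotProduct_one, Fintype.card_fin] using
      hQ.dotProduct_mulVec_le hmax 1
  have hbound := sum_abs_sub_le_of_two_mul_le_max hQ.eigenvalues (μ := 2 * #G.edgeFinset / n)
    (by rw [Fintype.card_fin]; omega)
    (signlessLap_posSemidef G).eigenvalues_nonneg hmax
    (by rw [hsum, Fintype.card_fin]; field_simp)
    (by rw [← mul_div_assoc, div_le_iff₀ (by positivity)]; linarith)
  rw [Fintype.card_fin, hsq] at hbound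
  refine hbound.trans_eq ?_
  congr 3
  field_simp
  ring

theorem stmt_9 {n : ℕ} (hn : 3 ≤ n) (G : SimpleGraph (Fin n)) [DecidableRel G.Adj]
    (hG : G.Connected) :
    signlessLapEnergy G ≤ 2 * (G.edgeFinset.card : ℝ) / n
      + Real.sqrt (((n : ℝ) - 1) *
          (2 * (G.edgeFinset.card : ℝ) + zagreb G - (4 * (G.edgeFinset.card : ℝ) ^ 2 / n) * (1 + 1 / n))) :=
  stmt_9_general hn G
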